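/- Let H be a Hermitian N×N complex matrix, P an orthogonal projection matrix with PH = HP, β > 0, and ψ ∈ ℂᴺ a unit vector with Pψ = ψ. Then ⟨ψ, e^{βH} ψ⟩ ≤ e^{β‖PHP‖}, and consequently the rank-one projection |ψ⟩⟨ψ| satisfies |ψ⟩⟨ψ| ⪯ Tr(e^{−βH}) · e^{β‖PHP‖} · σ_β(H) in the Loewner (positive semidefinite) order. Moreover, for any positive definite Hermitian matrix σ and any c ≥ 0, the Loewner inequality |ψ⟩⟨ψ| ⪯ c σ holds if and only if c ≥ ⟨ψ, σ^{−1} ψ⟩. -/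

import Mathlib

open Matrix ComplexOrder

/-- Partition function `Z_β(X) = Tr(e^{−βX})` (a real number, as the real part
of the trace; for Hermitian `X` the trace is real). -/
noncomputable def partitionZ {N : ℕ} (β : ℝ) (X : Matrix (Fin N) (Fin N) ℂ) : ℝ :=
  (Matrix.trace (NormedSpace.exp ((-β : ℂ) • X))).re

/-- Gibbs state `σ_β(X) = e^{−βX}/Z_β(X)`. -/
noncomputable def gibbs {N : ℕ} (β : ℝ) (X : Matrix (Fin N) (Fin N) ℂ) :
    Matrix (Fin N) (Fin N) ℂ :=
  ((partitionZ β X : ℝ) : ℂ)⁻¹ • NormedSpace.exp ((-β : ℂ) • X)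

/-- Free energy `F_β(X) = −β⁻¹ log Z_β(X)`. -/
noncomputable def freeEnergy {N : ℕ} (β : ℝ) (X : Matrix (Fin N) (Fin N) ℂ) : ℝ :=
  -β⁻¹ * Real.log (partitionZ β X)

/-- Operator norm of a matrix acting on `EuclideanSpace ℂ (Fin N)`
(i.e. with respect to the Euclidean norm on `ℂᴺ`). -/
noncomputable def matOpNorm {N : ℕ} (V : Matrix (Fin N) (Fin N) ℂ) : ℝ :=
  ‖Matrix.toEuclideanCLM (𝕜 := ℂ) V‖

/-! Since `P` commutes with `H` and fixes `ψ`, `e^{βH} ψ = e^{βHP} ψ`, hence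
`⟨ψ, e^{βH} ψ⟩ ≤ ‖e^{βHP}‖ ≤ e^{β‖HP‖}`, and `HP = PHP`.

Conjugating by `σ^{-1/2}` turns `c σ - |ψ⟩⟨ψ|` into `c - |φ⟩⟨φ|` with `φ = σ^{-1/2} ψ`, which by
Cauchy–Schwarz is positive semidefinite iff `‖φ‖² = ⟨ψ, σ⁻¹ ψ⟩ ≤ c`. For `σ = e^{-βH}` we have
`⟨ψ, σ⁻¹ ψ⟩ = ⟨ψ, e^{βH} ψ⟩`, so the first bound gives the Gibbs domination with
`c = e^{β‖PHP‖}`, once `Z_β(H)` has cancelled against the normalisation of `σ_β(H)`. -/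

namespace NormedSpace

variable {𝔸 : Type*} [NormedRing 𝔸] [NormedAlgebra ℂ 𝔸]

theorem norm_exp_le_exp_norm (h1 : ‖(1 : 𝔸)‖ ≤ 1) (x : 𝔸) : ‖exp x‖ ≤ Real.exp ‖x‖ := by
  have hterm (n : ℕ) : ‖(n.factorial⁻¹ : ℂ) • x ^ n‖ ≤ ‖x‖ ^ n / n.factorial := by
    rw [norm_smul, norm_inv, Complex.norm_natCast, div_eq_inv_mul]
    gcongr
    rcases n with _ | m
    · simpa using h1
    · exact norm_pow_le' x m.succ_pos
  rw [exp_eq_tsum ℂ, Real.exp_eq_exp_ℝ, exp_eq_tsum_div]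
  exact (norm_tsum_le_tsum_norm (norm_expSeries_summable' x)).trans
    ((norm_expSeries_summable' x).tsum_le_tsum hterm (Real.summable_pow_div_factorial ‖x‖))

theorem exp_mul_mul_of_isIdempotentElem [CompleteSpace 𝔸] {a p : 𝔸} (hp : IsIdempotentElem p)
    (hap : Commute a p) : exp (a * p) * p = exp a * p := by
  have hpow (n : ℕ) : (a * p) ^ n * p = a ^ n * p := by
    rw [hap.mul_pow, mul_assoc, ← pow_succ, hp.pow_succ_eq]
  simp only [exp_eq_tsum ℂ]
  rw [← (expSeries_summable' (𝕂 := ℂ) (a * p)).tsum_mul_right p,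
    ← (expSeries_summable' (𝕂 := ℂ) a).tsum_mul_right p]
  exact tsum_congr fun n => by rw [smul_mul_assoc, smul_mul_assoc, hpow]

end NormedSpace

open NormedSpace

theorem forall_norm_inner_sq_le_iff {𝕜 E : Type*} [RCLike 𝕜] [SeminormedAddCommGroup E]
    [InnerProductSpace 𝕜 E] (x : E) {c : ℝ} (hc : 0 ≤ c) :
    (∀ y : E, ‖(inner 𝕜 x y : 𝕜)‖ ^ 2 ≤ c * ‖y‖ ^ 2) ↔ ‖x‖ ^ 2 ≤ c := by
  refine ⟨fun h => ?_, fun h y => ?_⟩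
  · have hx := h x
    rw [inner_self_eq_norm_sq_to_K, norm_pow, RCLike.norm_ofReal, abs_norm] at hx
    rcases (sq_nonneg ‖x‖).eq_or_lt with h0 | hpos
    · rw [← h0]; exact hc
    · exact le_of_mul_le_mul_right (by rwa [sq] at hx) hpos
  · calc ‖(inner 𝕜 x y : 𝕜)‖ ^ 2 ≤ (‖x‖ * ‖y‖) ^ 2 := by
          gcongr; exact norm_inner_le_norm x y
      _ = ‖x‖ ^ 2 * ‖y‖ ^ 2 := mul_pow _ _ _
      _ ≤ c * ‖y‖ ^ 2 := by gcongr

namespace Matrix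

variable {n : Type*} [Fintype n] [DecidableEq n]

theorem star_dotProduct_smul_one_sub_vecMulVec_mulVec (φ v : n → ℂ) (c : ℝ) :
    star v ⬝ᵥ (((c : ℂ) • 1 - vecMulVec φ (star φ)) *ᵥ v)
      = ((c * ‖WithLp.toLp 2 v‖ ^ 2
          - ‖(inner ℂ (WithLp.toLp 2 φ) (WithLp.toLp 2 v) : ℂ)‖ ^ 2 : ℝ) : ℂ) := by
  have hinner (x y : n → ℂ) : star x ⬝ᵥ y = inner ℂ (WithLp.toLp 2 x) (WithLp.toLp 2 y) :=
    dotProduct_comm _ _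
  rw [sub_mulVec, smul_mulVec, one_mulVec, vecMulVec_mulVec, dotProduct_sub, dotProduct_smul,
    dotProduct_smul, hinner, hinner v φ, hinner φ v, ← inner_conj_symm,
    inner_self_eq_norm_sq_to_K]
  push_cast
  rw [← Complex.conj_mul']
  simp [mul_comm]

theorem posSemidef_smul_one_sub_vecMulVec_iff (φ : n → ℂ) {c : ℝ} (hc : 0 ≤ c) :
    ((c : ℂ) • (1 : Matrix n n ℂ) - vecMulVec φ (star φ)).PosSemidef ↔
      (star φ ⬝ᵥ φ).re ≤ c := by
  have hherm : ((c : ℂ) • (1 : Matrix n n ℂ) - vecMulVec φ (star φ)).IsHermitian :=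
    (isHermitian_one.smul (Complex.conj_ofReal c)).sub
      (posSemidef_vecMulVec_self_star φ).isHermitian
  have hnorm : (star φ ⬝ᵥ φ).re = ‖WithLp.toLp 2 φ‖ ^ 2 := by
    rw [← RCLike.re_to_complex, dotProduct_comm]
    exact inner_self_eq_norm_sq (𝕜 := ℂ) (WithLp.toLp 2 φ : EuclideanSpace ℂ n)
  rw [posSemidef_iff_dotProduct_mulVec, hnorm, ← forall_norm_inner_sq_le_iff (𝕜 := ℂ) _ hc]
  simp only [hherm, true_and, star_dotProduct_smul_one_sub_vecMulVec_mulVec,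
    Complex.zero_le_real, sub_nonneg]
  exact ⟨fun h y => h y.ofLp, fun h v => h _⟩

open scoped MatrixOrder in
theorem PosDef.exists_isHermitian_inv_sqrt {σ : Matrix n n ℂ} (hσ : σ.PosDef) :
    ∃ T : Matrix n n ℂ, IsUnit T ∧ T.IsHermitian ∧ T * σ * T = 1 ∧ T * T = σ⁻¹ := by
  set S := CFC.sqrt σ
  have hSS : S * S = σ := CFC.sqrt_mul_sqrt_self σ hσ.posSemidef.nonneg
  have hS : IsUnit S.det := (isUnit_iff_isUnit_det S).mp <|
    (CFC.isUnit_sqrt_iff σ hσ.posSemidef.nonneg).mpr hσ.isUnit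
  refine ⟨S⁻¹, (isUnit_iff_isUnit_det _).mpr (isUnit_nonsing_inv_det S hS),
    (CFC.sqrt_nonneg σ).posSemidef.isHermitian.inv, ?_, ?_⟩
  · rw [← hSS, ← mul_assoc, nonsing_inv_mul _ hS, one_mul, mul_nonsing_inv _ hS]
  · rw [← hSS, Matrix.mul_inv_rev]

theorem PosDef.posSemidef_smul_sub_vecMulVec_iff {σ : Matrix n n ℂ} (hσ : σ.PosDef)
    (ψ : n → ℂ) {c : ℝ} (hc : 0 ≤ c) :
    ((c : ℂ) • σ - vecMulVec ψ (star ψ)).PosSemidef ↔ (star ψ ⬝ᵥ (σ⁻¹ *ᵥ ψ)).re ≤ c := by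
  obtain ⟨T, hTu, hT, hTσT, hTT⟩ := hσ.exists_isHermitian_inv_sqrt
  have hconj : star T * ((c : ℂ) • σ - vecMulVec ψ (star ψ)) * T
      = (c : ℂ) • 1 - vecMulVec (T *ᵥ ψ) (star (T *ᵥ ψ)) := by
    rw [star_eq_conjTranspose, hT.eq, mul_sub, sub_mul, mul_smul_comm, smul_mul_assoc, hTσT,
      mul_vecMulVec, vecMulVec_mul, star_mulVec, hT.eq]
  have hnorm : star (T *ᵥ ψ) ⬝ᵥ (T *ᵥ ψ) = star ψ ⬝ᵥ (σ⁻¹ *ᵥ ψ) := by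
    rw [star_mulVec, hT.eq, ← dotProduct_mulVec, mulVec_mulVec, hTT]
  rw [← hTu.posSemidef_star_left_conjugate_iff, hconj, ← hnorm]
  exact posSemidef_smul_one_sub_vecMulVec_iff _ hc

theorem IsHermitian.posDef_exp {A : Matrix n n ℂ} (hA : A.IsHermitian) :
    (NormedSpace.exp A).PosDef := by
  set B := NormedSpace.exp ((2⁻¹ : ℂ) • A)
  have hB : B.IsHermitian := (hA.smul (by simp [IsSelfAdjoint])).exp
  have hBB : NormedSpace.exp A = Bᴴ * B := by
    rw [hB.eq, ← Matrix.exp_add_of_commute _ _ (Commute.refl _), ← add_smul]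
    norm_num
  rw [hBB]
  exact PosDef.conjTranspose_mul_self B (mulVec_injective_of_isUnit (isUnit_exp _))

section L2OpNorm

open scoped Matrix.Norms.L2Operator

theorem re_star_dotProduct_mulVec_le (M : Matrix n n ℂ) (ψ : n → ℂ) :
    (star ψ ⬝ᵥ (M *ᵥ ψ)).re ≤ ‖M‖ * ∑ i, ‖ψ i‖ ^ 2 := by
  set x : EuclideanSpace ℂ n := WithLp.toLp 2 ψ
  have hdot : star ψ ⬝ᵥ (M *ᵥ ψ) = inner ℂ x (toEuclideanCLM (𝕜 := ℂ) M x) := by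
    rw [toEuclideanCLM_toLp, EuclideanSpace.inner_toLp_toLp, dotProduct_comm]
  rw [← EuclideanSpace.norm_sq_eq x, hdot]
  calc _ ≤ ‖x‖ * ‖toEuclideanCLM (𝕜 := ℂ) M x‖ :=
        (Complex.re_le_norm _).trans (norm_inner_le_norm _ _)
    _ ≤ ‖x‖ * (‖M‖ * ‖x‖) := by gcongr; exact (toEuclideanCLM (𝕜 := ℂ) M).le_opNorm x
    _ = ‖M‖ * ‖x‖ ^ 2 := by ring

theorem re_star_dotProduct_exp_mulVec_le {A P : Matrix n n ℂ} (hP : IsIdempotentElem P)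
    (hAP : Commute A P) {ψ : n → ℂ} (hψ : ∑ i, ‖ψ i‖ ^ 2 = 1) (hPψ : P *ᵥ ψ = ψ) :
    (star ψ ⬝ᵥ (exp A *ᵥ ψ)).re ≤ Real.exp ‖A * P‖ := by
  have hone : ‖(1 : Matrix n n ℂ)‖ ≤ 1 := by
    rw [cstar_norm_def, map_one]
    exact ContinuousLinearMap.norm_id_le
  have hψP : exp A *ᵥ ψ = exp (A * P) *ᵥ ψ := by
    rw [← hPψ, mulVec_mulVec, mulVec_mulVec, exp_mul_mul_of_isIdempotentElem hP hAP]
  calc _ ≤ ‖exp (A * P)‖ := by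
        simpa only [hψ, mul_one, hψP] using re_star_dotProduct_mulVec_le (exp (A * P)) ψ
    _ ≤ Real.exp ‖A * P‖ := norm_exp_le_exp_norm hone _

end L2OpNorm

end Matrix

open scoped Matrix.Norms.L2Operator in
theorem matOpNorm_eq_norm {N : ℕ} (V : Matrix (Fin N) (Fin N) ℂ) : matOpNorm V = ‖V‖ := rfl

theorem partitionZ_pos {N : ℕ} [NeZero N] {X : Matrix (Fin N) (Fin N) ℂ} (hX : X.IsHermitian)
    (β : ℝ) : 0 < partitionZ β X :=
  (Complex.pos_iff.mp ((hX.smul (by simp [IsSelfAdjoint])).posDef_exp.trace_pos)).1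

theorem partitionZ_smul_gibbs {N : ℕ} {X : Matrix (Fin N) (Fin N) ℂ} (hX : X.IsHermitian)
    (β : ℝ) : ((partitionZ β X : ℝ) : ℂ) • gibbs β X = exp ((-β : ℂ) • X) := by
  rcases N.eq_zero_or_pos with rfl | hN
  · exact Subsingleton.elim _ _
  have : NeZero N := ⟨hN.ne'⟩
  rw [gibbs, smul_smul, mul_inv_cancel₀ (Complex.ofReal_ne_zero.mpr (partitionZ_pos hX β).ne'),
    one_smul]

theorem pure_state_dominated_by_gibbs_general (N : ℕ)
    (H P : Matrix (Fin N) (Fin N) ℂ)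
    (hH : H.IsHermitian) (hProj : P * P = P)
    (hcomm : P * H = H * P) (β : ℝ) (hβ : 0 < β)
    (ψ : Fin N → ℂ) (hψ : ∑ i, ‖ψ i‖ ^ 2 = 1) (hPψ : P.mulVec ψ = ψ) :
    ((star ψ) ⬝ᵥ ((NormedSpace.exp ((β : ℂ) • H)).mulVec ψ)).re
        ≤ Real.exp (β * matOpNorm (P * H * P)) ∧
      Matrix.PosSemidef
        ((((partitionZ β H * Real.exp (β * matOpNorm (P * H * P)) : ℝ)) : ℂ)
            • gibbs β H
          - Matrix.vecMulVec ψ (star ψ)) ∧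
      ∀ σ : Matrix (Fin N) (Fin N) ℂ, σ.PosDef → ∀ c : ℝ, 0 ≤ c →
        (Matrix.PosSemidef (((c : ℝ) : ℂ) • σ - Matrix.vecMulVec ψ (star ψ))
          ↔ ((star ψ) ⬝ᵥ (σ⁻¹.mulVec ψ)).re ≤ c) := by
  have hexp :
      (star ψ ⬝ᵥ (exp ((β : ℂ) • H) *ᵥ ψ)).re ≤ Real.exp (β * matOpNorm (P * H * P)) := by
    open scoped Matrix.Norms.L2Operator in
    have hnorm : ‖(β : ℂ) • H * P‖ = β * matOpNorm (P * H * P) := by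
      rw [matOpNorm_eq_norm, hcomm, mul_assoc, hProj, smul_mul_assoc, norm_smul,
        Complex.norm_of_nonneg hβ.le]
    exact hnorm ▸ re_star_dotProduct_exp_mulVec_le hProj
      (Commute.smul_left (Commute.symm hcomm) _) hψ hPψ
  have hloewner (σ : Matrix (Fin N) (Fin N) ℂ) (hσ : σ.PosDef) (c : ℝ) (hc : 0 ≤ c) :=
    hσ.posSemidef_smul_sub_vecMulVec_iff ψ hc
  refine ⟨hexp, ?_, hloewner⟩
  have hE : (exp ((-β : ℂ) • H)).PosDef := (hH.smul (by simp [IsSelfAdjoint])).posDef_exp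
  have hEinv : (exp ((-β : ℂ) • H))⁻¹ = exp ((β : ℂ) • H) := by
    rw [neg_smul, ← Matrix.exp_neg, neg_neg]
  rw [Complex.ofReal_mul, mul_comm, mul_smul, partitionZ_smul_gibbs hH]
  exact (hloewner _ hE _ (Real.exp_nonneg _)).mpr (hEinv ▸ hexp)

/-- **Domination of a low-energy pure state by the Gibbs state.**
For Hermitian `H`, an orthogonal projection `P` commuting with `H`, `β > 0`
and a unit vector `ψ` with `Pψ = ψ`:
`⟨ψ, e^{βH}ψ⟩ ≤ e^{β‖PHP‖}`; consequently
`|ψ⟩⟨ψ| ⪯ Tr(e^{−βH}) e^{β‖PHP‖} σ_β(H)` in the Loewner order; moreover for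
any positive definite `σ` and `c ≥ 0`, `|ψ⟩⟨ψ| ⪯ c σ ↔ ⟨ψ, σ⁻¹ψ⟩ ≤ c`. -/
theorem pure_state_dominated_by_gibbs (N : ℕ)
    (H P : Matrix (Fin N) (Fin N) ℂ)
    (hH : H.IsHermitian) (hP : P.IsHermitian) (hProj : P * P = P)
    (hcomm : P * H = H * P) (β : ℝ) (hβ : 0 < β)
    (ψ : Fin N → ℂ) (hψ : ∑ i, ‖ψ i‖ ^ 2 = 1) (hPψ : P.mulVec ψ = ψ) :
    ((star ψ) ⬝ᵥ ((NormedSpace.exp ((β : ℂ) • H)).mulVec ψ)).re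
        ≤ Real.exp (β * matOpNorm (P * H * P)) ∧
      Matrix.PosSemidef
        ((((partitionZ β H * Real.exp (β * matOpNorm (P * H * P)) : ℝ)) : ℂ)
            • gibbs β H
          - Matrix.vecMulVec ψ (star ψ)) ∧
      ∀ σ : Matrix (Fin N) (Fin N) ℂ, σ.PosDef → ∀ c : ℝ, 0 ≤ c →
        (Matrix.PosSemidef (((c : ℝ) : ℂ) • σ - Matrix.vecMulVec ψ (star ψ))
          ↔ ((star ψ) ⬝ᵥ (σ⁻¹.mulVec ψ)).re ≤ c) :=
  pure_state_dominated_by_gibbs_general N H P hH hProj hcomm β hβ ψ hψ hPψ
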